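/- arXiv:1508.05062 — 3 statements merged into one kernel-verified Lean document; each statement's English description precedes it below -/
import Mathlib

section
/- Let N be a nonnegative integer with Zeckendorf digits (ε_i)_{i≥0} in the Fibonacci base (so N = Σ_i ε_i F_i, ε_i ∈ {0,1}, ε_{i+1}ε_i ≠ 11, finitely many nonzero). Define a carry sequence and new digits as follows. If ε_0 = 0: set c_{-1} = 1 and for every i ≥ 0 put ε'_{2i} = ⌊(ε_{2i} + c_{i-1})/(ε_{2i+1} c_{i-1} + 1)⌋, ε'_{2i+1} = ⌊ε_{2i+1}/(c_{i-1} + 1)⌋, c_i = c_{i-1} ε_{2i+1}. If ε_0 = 1: set ε'_0 = 0, c_0 = 1 and for every i ≥ 1 put ε'_{2i-1} = ⌊(ε_{2i-1} + c_{i-1})/(ε_{2i} c_{i-1} + 1)⌋, ε'_{2i} = ⌊ε_{2i}/(c_{i-1} + 1)⌋, c_i = c_{i-1} ε_{2i}. Then the resulting sequence (ε'_i)_{i≥0} has ε'_i ∈ {0,1}, ε'_{i+1}ε'_i ≠ 11, finitely many nonzero terms, and Σ_i ε'_i F_i = N + 1; i.e., the algorithm computes the Zeckendorf digits of N+1 in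 the Fibonacci base. -/
/-!
Adding one to a Zeckendorf expansion only rewrites its lowest block. If the digits below
position `p` alternate downwards, `1` at `p - 1`, `0` at `p - 2`, `1` at `p - 3`, …, and
`ε p = ε (p+1) = 0`, then the telescoping sums `F₀ + F₂ + ⋯ + F₂ₖ = F₂ₖ₊₁ - 1` and
`F₁ + F₃ + ⋯ + F₂ₖ₊₁ = F₂ₖ₊₂ - 1` show that this block is worth `F p - 1`; so `N + 1` is
obtained by clearing the block and setting the digit at `p` to `1`, which creates no two
consecutive ones. The carry of the algorithm stays `1` exactly while it runs through the
pairs `01` of this block and drops to `0` at the pair `00` after it, so the algorithm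
performs precisely this rewriting.
-/

/-- Fibonacci sequence with `F 0 = 1`, `F 1 = 2`, `F (n+2) = F (n+1) + F n`. -/
def fibF : ℕ → ℕ
  | 0 => 1
  | 1 => 2
  | (n+2) => fibF (n+1) + fibF n

lemma fibF_pos : ∀ n, 0 < fibF n
  | 0 => by simp [fibF]
  | 1 => by simp [fibF]
  | (n+2) => by
      have h1 := fibF_pos (n+1)
      simp only [fibF]
      omega

open Finset

def IsZeckendorfRep (N : ℕ) (ε : ℕ → ℕ) : Prop :=
  (∀ i, ε i ≤ 1) ∧ (∀ i, ¬(ε (i+1) = 1 ∧ ε i = 1)) ∧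
    ∃ k, (∀ i, k ≤ i → ε i = 0) ∧ N = ∑ i ∈ range k, ε i * fibF i

theorem sum_alternating_digits_add_one (ε : ℕ → ℕ) :
    ∀ p, (∀ j < p, ε j = (p - j) % 2) → ∑ j ∈ range p, ε j * fibF j + 1 = fibF p
  | 0, _ => by simp [fibF]
  | 1, h => by simp [h 0 one_pos, fibF]
  | p + 2, h => by
    have ih := sum_alternating_digits_add_one ε p fun j hj => by rw [h j (by omega)]; omega
    rw [sum_range_succ, sum_range_succ, h p (by omega), h (p + 1) (by omega),
      show (p + 2 - p) % 2 = 0 by omega, show (p + 2 - (p + 1)) % 2 = 1 by omega, fibF]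
    omega

theorem IsZeckendorfRep.succ {N p : ℕ} {ε ε' : ℕ → ℕ} (hε : IsZeckendorfRep N ε)
    (hprefix : ∀ j < p, ε j = (p - j) % 2) (hp : ε p = 0) (hp1 : ε (p + 1) = 0)
    (hprefix' : ∀ j < p, ε' j = 0) (hp' : ε' p = 1) (hp1' : ε' (p + 1) = 0)
    (htail : ∀ j, p + 2 ≤ j → ε' j = ε j) :
    IsZeckendorfRep (N + 1) ε' := by
  obtain ⟨h01, hno11, k, hk, rfl⟩ := hε
  have hdigit : ∀ j, ε' j = 0 ∨ (j = p ∧ ε' j = 1) ∨ (p + 2 ≤ j ∧ ε' j = ε j) := by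
    intro j
    rcases lt_trichotomy j p with hj | rfl | hj
    · exact Or.inl (hprefix' j hj)
    · exact Or.inr (Or.inl ⟨rfl, hp'⟩)
    · rcases (show j = p + 1 ∨ p + 2 ≤ j by omega) with rfl | hj
      · exact Or.inl hp1'
      · exact Or.inr (Or.inr ⟨hj, htail j hj⟩)
  have hsum : ∀ K, p + 2 ≤ K →
      ∑ j ∈ range K, ε' j * fibF j = ∑ j ∈ range K, ε j * fibF j + 1 := by
    intro K hK
    induction K, hK using Nat.le_induction with
    | base =>
      have hblock := sum_alternating_digits_add_one ε p hprefix
      have hzero : ∑ j ∈ range p, ε' j * fibF j = 0 :=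
        sum_eq_zero fun j hj => by rw [hprefix' j (mem_range.mp hj), zero_mul]
      simp only [sum_range_succ, hzero, hp, hp1, hp', hp1']
      omega
    | succ K hK ih => rw [sum_range_succ, sum_range_succ, ih, htail K hK]; ring
  refine ⟨fun j => ?_, fun j ⟨h1, h0⟩ => ?_, k + p + 2, fun j hj => ?_, ?_⟩
  · have := hdigit j; have := h01 j; omega
  · have := hdigit j; have := hdigit (j + 1); have := hno11 j; omega
  · rw [htail j (by omega), hk j (by omega)]
  · rw [hsum _ (by omega), eventually_constant_sum (fun j hj => by rw [hk j hj, zero_mul])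
      (by omega : k ≤ k + p + 2)]

theorem exists_alternating_run {ε : ℕ → ℕ} {s : ℕ} (h01 : ∀ i, ε i ≤ 1)
    (hno11 : ∀ i, ¬(ε (i+1) = 1 ∧ ε i = 1)) (hs : ε s = 0)
    (hend : ∃ l, ε (s + 2 * l + 1) = 0) :
    ∃ m, (∀ l < m, ε (s + 2 * l) = 0 ∧ ε (s + 2 * l + 1) = 1) ∧
      ε (s + 2 * m) = 0 ∧ ε (s + 2 * m + 1) = 0 := by
  classical
  have hodd : ∀ l < Nat.find hend, ε (s + 2 * l + 1) = 1 := fun l hl => by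
    have := Nat.find_min hend hl; have := h01 (s + 2 * l + 1); omega
  have heven : ∀ l ≤ Nat.find hend, ε (s + 2 * l) = 0 := by
    rintro (_ | l) hl
    · simpa using hs
    · have := hodd l (by omega); have := hno11 (s + 2 * l + 1); have := h01 (s + 2 * (l + 1))
      rw [show s + 2 * l + 1 + 1 = s + 2 * (l + 1) by ring] at *
      omega
  exact ⟨Nat.find hend, fun l hl => ⟨heven l hl.le, hodd l hl⟩, heven _ le_rfl,
    Nat.find_spec hend⟩

theorem digit_eq_mod_two_of_run {ε : ℕ → ℕ} {s m : ℕ}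
    (hrun : ∀ l < m, ε (s + 2 * l) = 0 ∧ ε (s + 2 * l + 1) = 1) :
    ∀ j, s ≤ j → j < s + 2 * m → ε j = (s + 2 * m - j) % 2 := by
  intro j hsj hjm
  obtain ⟨l, rfl | rfl⟩ : ∃ l, j = s + 2 * l ∨ j = s + 2 * l + 1 := ⟨(j - s) / 2, by omega⟩
  · rw [(hrun l (by omega)).1]; omega
  · rw [(hrun l (by omega)).2]; omega

/-- The carry algorithm on the digit pairs `(ε (s+2l), ε (s+2l+1))`, `c l` being the carry
entering pair `l`; the cases `ε₀ = 0` and `ε₀ = 1` of the algorithm are `s = 0` and `s = 1`. -/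
def AddOneCarry (s : ℕ) (ε ε' c : ℕ → ℕ) : Prop :=
  c 0 = 1 ∧ ∀ l,
    ε' (s + 2 * l) = (ε (s + 2 * l) + c l) / (ε (s + 2 * l + 1) * c l + 1) ∧
    ε' (s + 2 * l + 1) = ε (s + 2 * l + 1) / (c l + 1) ∧
    c (l + 1) = c l * ε (s + 2 * l + 1)

namespace AddOneCarry

variable {s m : ℕ} {ε ε' c : ℕ → ℕ}

theorem carry_eq (h : AddOneCarry s ε ε' c) (hodd : ∀ l < m, ε (s + 2 * l + 1) = 1)
    (hm1 : ε (s + 2 * m + 1) = 0) (l : ℕ) : c l = if l ≤ m then 1 else 0 := by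
  induction l with
  | zero => simp [h.1]
  | succ l ih =>
    rw [(h.2 l).2.2, ih]
    rcases lt_trichotomy l m with hl | rfl | hl
    · simp [hodd l hl, hl.le, Nat.succ_le_of_lt hl]
    · simp [hm1]
    · simp [hl.not_ge, (show ¬ l + 1 ≤ m by omega)]

theorem eq_of_run (h : AddOneCarry s ε ε' c)
    (hrun : ∀ l < m, ε (s + 2 * l) = 0 ∧ ε (s + 2 * l + 1) = 1)
    (hm : ε (s + 2 * m) = 0) (hm1 : ε (s + 2 * m + 1) = 0) :
    (∀ j, s ≤ j → j < s + 2 * m → ε' j = 0) ∧ ε' (s + 2 * m) = 1 ∧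
      ε' (s + 2 * m + 1) = 0 ∧ ∀ j, s + 2 * m + 2 ≤ j → ε' j = ε j := by
  have hc := h.carry_eq (fun l hl => (hrun l hl).2) hm1
  have hpair : ∀ j, s ≤ j → ∃ l, j = s + 2 * l ∨ j = s + 2 * l + 1 :=
    fun j hj => ⟨(j - s) / 2, by omega⟩
  refine ⟨fun j hsj hjm => ?_, ?_, ?_, fun j hj => ?_⟩
  · obtain ⟨l, rfl | rfl⟩ := hpair j hsj
    · simp [(h.2 l).1, (hrun l (by omega)).1, (hrun l (by omega)).2, hc l, show l ≤ m by omega]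
    · simp [(h.2 l).2.1, (hrun l (by omega)).2, hc l, show l ≤ m by omega]
  · simp [(h.2 m).1, hm, hm1, hc m]
  · simp [(h.2 m).2.1, hm1]
  · obtain ⟨l, rfl | rfl⟩ := hpair j (by omega)
    · simp [(h.2 l).1, hc l, show ¬ l ≤ m by omega]
    · simp [(h.2 l).2.1, hc l, show ¬ l ≤ m by omega]

end AddOneCarry

/-- Let `N` be a nonnegative integer with Zeckendorf digits `ε` in th
Fibonacci base.  The carry algorithm (case `ε 0 = 0` resp. `ε 0 = 1`, with carries `c`,
where `c i` denotes the carry `c_{i-1}(N+1)` resp. `c_i(N+1)`) produces the Zeckendorf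
digits `ε'` of `N + 1`:  `ε' i ∈ {0,1}`, no two consecutive ones, finitely many nonzero
terms, and `∑ i, ε' i * F i = N + 1`. -/
theorem stmt0 (N : ℕ) (ε ε' c : ℕ → ℕ)
    (hε01 : ∀ i, ε i ≤ 1)
    (hno11 : ∀ i, ¬(ε (i+1) = 1 ∧ ε i = 1))
    (hrep : ∃ k, (∀ i, k ≤ i → ε i = 0) ∧ N = ∑ i ∈ Finset.range k, ε i * fibF i)
    (halg :
      (ε 0 = 0 ∧ c 0 = 1 ∧
        ∀ i : ℕ,
          ε' (2*i) = (ε (2*i) + c i) / (ε (2*i+1) * c i + 1) ∧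
          ε' (2*i+1) = ε (2*i+1) / (c i + 1) ∧
          c (i+1) = c i * ε (2*i+1))
      ∨
      (ε 0 = 1 ∧ ε' 0 = 0 ∧ c 0 = 1 ∧
        ∀ i : ℕ, 1 ≤ i →
          ε' (2*i-1) = (ε (2*i-1) + c (i-1)) / (ε (2*i) * c (i-1) + 1) ∧
          ε' (2*i) = ε (2*i) / (c (i-1) + 1) ∧
          c i = c (i-1) * ε (2*i))) :
    (∀ i, ε' i ≤ 1) ∧ (∀ i, ¬(ε' (i+1) = 1 ∧ ε' i = 1)) ∧
    ∃ k, (∀ i, k ≤ i → ε' i = 0) ∧ N + 1 = ∑ i ∈ Finset.range k, ε' i * fibF i := by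
  have hε : IsZeckendorfRep N ε := ⟨hε01, hno11, hrep⟩
  obtain ⟨k, hk, -⟩ := hrep
  rcases halg with ⟨he0, hc0, hstep⟩ | ⟨he0, he'0, hc0, hstep⟩
  · have hcarry : AddOneCarry 0 ε ε' c := ⟨hc0, by simpa only [zero_add] using hstep⟩
    obtain ⟨m, hrun, hm, hm1⟩ :=
      exists_alternating_run (s := 0) hε01 hno11 he0 ⟨k, hk (0 + 2 * k + 1) (by omega)⟩
    obtain ⟨hlow', hm', hm1', htail⟩ := hcarry.eq_of_run hrun hm hm1
    exact hε.succ (digit_eq_mod_two_of_run hrun · (Nat.zero_le _)) hm hm1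
      (hlow' · (Nat.zero_le _)) hm' hm1' htail
  · have hcarry : AddOneCarry 1 ε ε' c := ⟨hc0, fun l => by
      have := hstep (l + 1) (by omega)
      rwa [show 2 * (l + 1) - 1 = 1 + 2 * l by omega, show 2 * (l + 1) = 1 + 2 * l + 1 by omega,
        Nat.add_sub_cancel] at this⟩
    have he1 : ε 1 = 0 := by
      have : ¬(ε 1 = 1 ∧ ε 0 = 1) := hno11 0
      have := hε01 1
      omega
    obtain ⟨m, hrun, hm, hm1⟩ :=
      exists_alternating_run (s := 1) hε01 hno11 he1 ⟨k, hk (1 + 2 * k + 1) (by omega)⟩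
    obtain ⟨hlow', hm', hm1', htail⟩ := hcarry.eq_of_run hrun hm hm1
    refine hε.succ (p := 1 + 2 * m) (fun j hj => ?_) hm hm1 (fun j hj => ?_) hm' hm1' htail
    · rcases Nat.eq_zero_or_pos j with rfl | hj0
      · rw [he0]; omega
      · exact digit_eq_mod_two_of_run hrun j hj0 hj
    · rcases Nat.eq_zero_or_pos j with rfl | hj0
      · exact he'0
      · exact hlow' j hj0 hj
end

section
/- Let i, j, n be positive integers with F_n ≤ i, j ≤ F_{n+1} − 1. Then the transition probability from i to j equals the transition probability from i − F_n to j − F_n, i.e. S_{i,j} = S_{i−F_n, j−F_n}. -/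
/-- Zeckendorf digits of `N` in the base `fibF`: `N = ∑ i, zeck N i * fibF i`,
with `zeck N i ∈ {0,1}` and no two consecutive `1`'s. -/
def zeck (N i : ℕ) : ℕ :=
  if h : N = 0 then 0
  else if i = Nat.findGreatest (fun j => fibF j ≤ N) N then 1
  else zeck (N - fibF (Nat.findGreatest (fun j => fibF j ≤ N) N)) i
termination_by N
decreasing_by
  exact Nat.sub_lt (Nat.pos_of_ne_zero h) (fibF_pos _)

lemma zeck_eq_zero_of_lt : ∀ N, ∀ i, N < i → zeck N i = 0 := by
  intro N
  induction N using Nat.strong_induction_on with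
  | _ N ih =>
    intro i hi
    rw [zeck]
    split
    · rfl
    · rename_i h
      have hkN : Nat.findGreatest (fun j => fibF j ≤ N) N ≤ N := Nat.findGreatest_le N
      rw [if_neg (by omega)]
      exact ih _ (Nat.sub_lt (Nat.pos_of_ne_zero h) (fibF_pos _)) i
        (lt_of_le_of_lt (Nat.sub_le _ _) hi)

lemma exists_break0 (N : ℕ) : ∃ i, ¬(zeck N (2*i+1) = 1 ∧ zeck N (2*i) = 0) := by
  refine ⟨N + 1, ?_⟩
  have h : zeck N (2*(N+1)+1) = 0 := zeck_eq_zero_of_lt N _ (by omega)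
  simp [h]

lemma exists_break1 (N : ℕ) : ∃ i, ¬(zeck N (2*i+2) = 1 ∧ zeck N (2*i+1) = 0) := by
  refine ⟨N + 1, ?_⟩
  have h : zeck N (2*(N+1)+2) = 0 := zeck_eq_zero_of_lt N _ (by omega)
  simp [h]

/-- The number `s` of `10`-blocks carried in the stochastic Fibonacci adding machine:
if the digits of `N` end with `00(10)^s` (case `ε₀ = 0`) or with `00(10)^s1`
(case `ε₀ = 1`), this returns `s`. -/
def carryLen (N : ℕ) : ℕ :=
  if zeck N 0 = 0 then Nat.find (exists_break0 N) else Nat.find (exists_break1 N)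

/-- `Pprod p t = p 1 * p 2 * ⋯ * p t`. -/
def Pprod (p : ℕ → ℝ) (t : ℕ) : ℝ := ∏ i ∈ Finset.Icc 1 t, p i

/-- The transition matrix `S` of the Fibonacci stochastic adding machine associated to
the probability sequence `p`:  `S N N = 1 - p 1`;  if the digits of `N` end with
`00(10)^s` then `S N (N+1) = p 1 ⋯ p (s+1)` and `S N (N+1-F (2m)) = p 1 ⋯ p m * (1 - p (m+1))`
for `1 ≤ m ≤ s`;  if the digits of `N` end with `00(10)^s1` then
`S N (N+1) = p 1 ⋯ p (s+2)` and `S N (N+1-F (2m-1)) = p 1 ⋯ p m * (1 - p (m+1))` for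
`1 ≤ m ≤ s+1`;  all other entries vanish. -/
noncomputable def Smat (p : ℕ → ℝ) (N M : ℕ) : ℝ :=
  (if M = N then 1 - p 1 else 0) +
  if zeck N 0 = 0 then
    (if M = N + 1 then Pprod p (carryLen N + 1) else 0) +
    ∑ m ∈ Finset.Icc 1 (carryLen N),
      (if M = N + 1 - fibF (2*m) then Pprod p m * (1 - p (m+1)) else 0)
  else
    (if M = N + 1 then Pprod p (carryLen N + 2) else 0) +
    ∑ m ∈ Finset.Icc 1 (carryLen N + 1),
      (if M = N + 1 - fibF (2*m - 1) then Pprod p m * (1 - p (m+1)) else 0)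

/-!
For `F n ≤ i < F (n+1)` the Zeckendorf digits of `i` are those of `a = i - F n` plus a `1` at
position `n`, and `a < F (n-1)` leaves position `n - 1` empty. A row of `S` depends only on the
last digit `r`, the carry length `s` and the targets `N + 1 - F (2m - r)`; these targets move
with `N` as long as `F (2m - r) ≤ a + 1`, which the carried blocks of `a` already guarantee.
The carry length of `i` equals that of `a` unless the block run of `a` reaches position `n - 1`,
i.e. `i = F (n+1) - 1`; then `i` carries one block more, but the new target is `0` and the move to
`i + 1 = F (n+1)` also leaves the window `[F n, F (n+1))`.
-/

open Finset

lemma fibF_add_two (n : ℕ) : fibF (n + 2) = fibF (n + 1) + fibF n := rfl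

lemma fibF_strictMono : StrictMono fibF :=
  strictMono_nat_of_lt_succ fun n => by
    cases n with
    | zero => decide
    | succ k => rw [fibF_add_two]; have := fibF_pos k; omega

lemma findGreatest_fibF_le_eq {N n : ℕ} (h1 : fibF n ≤ N) (h2 : N < fibF (n + 1)) :
    Nat.findGreatest (fun j => fibF j ≤ N) N = n := by
  rw [Nat.findGreatest_eq_iff]
  refine ⟨(fibF_strictMono.id_le n).trans h1, fun _ => h1, fun k hk _ hk' => ?_⟩
  exact (h2.trans_le (fibF_strictMono.monotone hk)).not_ge hk'

lemma zeck_eq_of_fibF_le_of_lt {N n : ℕ} (h1 : fibF n ≤ N) (h2 : N < fibF (n + 1)) (i : ℕ) :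
    zeck N i = if i = n then 1 else zeck (N - fibF n) i := by
  rw [zeck, dif_neg ((fibF_pos n).trans_le h1).ne', findGreatest_fibF_le_eq h1 h2]

lemma zeck_le_one (N i : ℕ) : zeck N i ≤ 1 := by
  fun_induction zeck N i <;> simp_all

lemma sum_fibF_le_of_zeck_eq_one {N : ℕ} {T : Finset ℕ} (hT : ∀ t ∈ T, zeck N t = 1) :
    ∑ t ∈ T, fibF t ≤ N := by
  induction N using Nat.strong_induction_on generalizing T with
  | _ N ih =>
    rcases Nat.eq_zero_or_pos N with rfl | hN
    · have hT0 : T = ∅ := eq_empty_of_forall_notMem fun t ht => by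
        simpa [zeck] using hT t ht
      simp [hT0]
    set g := Nat.findGreatest (fun j => fibF j ≤ N) N
    have hg : fibF g ≤ N := Nat.findGreatest_spec (P := fun j => fibF j ≤ N) (Nat.zero_le N) hN
    have hrest : ∑ t ∈ T.erase g, fibF t ≤ N - fibF g := by
      refine ih _ (Nat.sub_lt hN (fibF_pos g)) fun t ht => ?_
      have := hT t (mem_of_mem_erase ht)
      rwa [zeck, dif_neg hN.ne', if_neg (ne_of_mem_erase ht)] at this
    by_cases hgT : g ∈ T
    · rw [← insert_erase hgT, sum_insert (notMem_erase g T)]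
      omega
    · rw [erase_eq_of_notMem hgT] at hrest
      omega

lemma fibF_le_of_zeck_eq_one {N k : ℕ} (h : zeck N k = 1) : fibF k ≤ N := by
  simpa using sum_fibF_le_of_zeck_eq_one (T := {k}) (by simpa using h)

lemma zeck_eq_zero_of_lt_fibF {N k : ℕ} (h : N < fibF k) : zeck N k = 0 := by
  have := zeck_le_one N k
  by_contra h0
  exact (fibF_le_of_zeck_eq_one (by omega)).not_gt h

lemma sum_range_fibF_odd (k s : ℕ) :
    ∑ t ∈ range s, fibF (2 * t + k + 1) = fibF (2 * s + k) - fibF k := by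
  induction s with
  | zero => simp
  | succ s ih =>
    rw [sum_range_succ, ih, show 2 * (s + 1) + k = 2 * s + k + 2 by ring, fibF_add_two]
    have := fibF_strictMono.monotone (show k ≤ 2 * s + k by omega)
    omega

/-- Both cases of `carryLen` at once: with `r = ε₀`, `carryLen N` counts the leading blocks
`ε_{2t+r+1} ε_{2t+r} = 10`. -/
def IsCarryBlock (N t : ℕ) : Prop :=
  zeck N (2 * t + zeck N 0 + 1) = 1 ∧ zeck N (2 * t + zeck N 0) = 0

lemma carryLen_eq_iff {N s : ℕ} :
    carryLen N = s ↔ ¬ IsCarryBlock N s ∧ ∀ t < s, IsCarryBlock N t := by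
  unfold carryLen IsCarryBlock
  rcases (zeck_le_one N 0).lt_or_eq with h | h
  · rw [if_pos (by omega), Nat.find_eq_iff]
    simp only [Nat.lt_one_iff.mp h, add_zero, not_not]
  · rw [if_neg (by omega), Nat.find_eq_iff]
    simp only [h, not_not]

lemma isCarryBlock_of_lt_carryLen {N t : ℕ} (ht : t < carryLen N) : IsCarryBlock N t :=
  (carryLen_eq_iff.mp rfl).2 t ht

/-- The carried digits `F (2t + r + 1)`, `t < s`, together with `ε₀ = r` telescope to
`F (2s + r) - 1`. -/
lemma fibF_le_succ_of_carryLen (N : ℕ) : fibF (2 * carryLen N + zeck N 0) ≤ N + 1 := by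
  set s := carryLen N
  set r := zeck N 0 with hr
  set T := (range s).image (fun t => 2 * t + r + 1)
  have hT : ∀ t ∈ T, zeck N t = 1 := by
    simp only [T, mem_image, mem_range]
    rintro _ ⟨t, ht, rfl⟩
    exact (isCarryBlock_of_lt_carryLen ht).1
  have hsumT : ∑ t ∈ T, fibF t = fibF (2 * s + r) - fibF r := by
    rw [sum_image (fun x _ y _ h => by omega), sum_range_fibF_odd]
  have := fibF_strictMono.monotone (show r ≤ 2 * s + r by omega)
  obtain h0 | h1 : r = 0 ∨ r = 1 := by have := zeck_le_one N 0; omega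
  · have hle := sum_fibF_le_of_zeck_eq_one hT
    rw [hsumT, h0] at hle
    rw [h0] at this ⊢
    have : fibF 0 = 1 := rfl
    omega
  · have hle := sum_fibF_le_of_zeck_eq_one (T := insert 0 T) fun t ht => by
      rcases mem_insert.1 ht with rfl | ht
      exacts [hr.symm.trans h1, hT t ht]
    rw [sum_insert (by simp [T]), hsumT, h1] at hle
    rw [h1] at this ⊢
    have : fibF 0 = 1 := rfl
    have : fibF 1 = 2 := rfl
    omega

lemma Smat_eq_sum (p : ℕ → ℝ) (N M : ℕ) : Smat p N M =
    (if M = N then 1 - p 1 else 0) +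
    ((if M = N + 1 then Pprod p (carryLen N + zeck N 0 + 1) else 0) +
    ∑ m ∈ Icc 1 (carryLen N + zeck N 0),
      if M = N + 1 - fibF (2 * m - zeck N 0) then Pprod p m * (1 - p (m + 1)) else 0) := by
  unfold Smat
  rcases (zeck_le_one N 0).lt_or_eq with h | h
  · simp [Nat.lt_one_iff.mp h]
  · simp only [h, if_neg one_ne_zero]

lemma zeck_add_fibF {a k : ℕ} (ha : a < fibF k) (i : ℕ) :
    zeck (a + fibF (k + 1)) i = if i = k + 1 then 1 else zeck a i := by
  rw [zeck_eq_of_fibF_le_of_lt (n := k + 1) (by omega) (by rw [fibF_add_two]; omega),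
    Nat.add_sub_cancel]

lemma zeck_add_fibF_zero {a k : ℕ} (ha : a < fibF k) : zeck (a + fibF (k + 1)) 0 = zeck a 0 := by
  rw [zeck_add_fibF ha, if_neg k.succ_ne_zero.symm]

lemma isCarryBlock_add_fibF_iff {a k t : ℕ} (ha : a < fibF k) (ht : 2 * t + zeck a 0 < k) :
    IsCarryBlock (a + fibF (k + 1)) t ↔ IsCarryBlock a t := by
  simp only [IsCarryBlock, zeck_add_fibF_zero ha, zeck_add_fibF ha,
    if_neg (show 2 * t + zeck a 0 + 1 ≠ k + 1 by omega),
    if_neg (show 2 * t + zeck a 0 ≠ k + 1 by omega)]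

lemma two_mul_carryLen_add_le {a k : ℕ} (ha : a < fibF k) : 2 * carryLen a + zeck a 0 ≤ k :=
  fibF_strictMono.le_iff_le.mp (by have := fibF_le_succ_of_carryLen a; omega)

lemma carryLen_add_fibF {a k : ℕ} (ha : a < fibF k) :
    carryLen (a + fibF (k + 1)) =
      if 2 * carryLen a + zeck a 0 = k then carryLen a + 1 else carryLen a := by
  have hle := two_mul_carryLen_add_le ha
  have hblocks : ∀ t < carryLen a, IsCarryBlock (a + fibF (k + 1)) t := fun t ht =>
    (isCarryBlock_add_fibF_iff ha (by omega)).2 (isCarryBlock_of_lt_carryLen ht)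
  rw [carryLen_eq_iff]
  split_ifs with hk
  · refine ⟨fun ⟨hone, _⟩ => ?_, fun t ht => ?_⟩
    · have hzero : zeck a (2 * (carryLen a + 1) + zeck a 0 + 1) = 0 :=
        zeck_eq_zero_of_lt_fibF (ha.trans_le (fibF_strictMono.monotone (by omega)))
      rw [zeck_add_fibF_zero ha, zeck_add_fibF ha, if_neg (by omega), hzero] at hone
      exact zero_ne_one hone
    · rcases (Nat.lt_succ_iff.1 ht).lt_or_eq with ht | rfl
      · exact hblocks t ht
      · simp [IsCarryBlock, zeck_add_fibF_zero ha, zeck_add_fibF ha, hk,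
          zeck_eq_zero_of_lt_fibF ha]
  · exact ⟨mt (isCarryBlock_add_fibF_iff ha (by omega)).1 (carryLen_eq_iff.mp rfl).1, hblocks⟩

lemma Smat_add_fibF (p : ℕ → ℝ) {a b k : ℕ} (ha : a < fibF k) (hb : b < fibF k) :
    Smat p (a + fibF (k + 1)) (b + fibF (k + 1)) = Smat p a b := by
  rw [Smat_eq_sum, Smat_eq_sum, zeck_add_fibF_zero ha, carryLen_add_fibF ha]
  set c := fibF (k + 1)
  set s := carryLen a
  set r := zeck a 0
  have hshift : ∀ m ∈ Icc 1 (s + r),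
      (b + c = a + c + 1 - fibF (2 * m - r) ↔ b = a + 1 - fibF (2 * m - r)) := by
    intro m hm
    have := (fibF_strictMono.monotone (show 2 * m - r ≤ 2 * s + r by grind)).trans
      (fibF_le_succ_of_carryLen a)
    omega
  have hsum := sum_congr rfl fun m hm =>
    if_congr (hshift m hm) (rfl : Pprod p m * (1 - p (m + 1)) = _) (rfl : (0 : ℝ) = 0)
  have hdiag : (if b + c = a + c then 1 - p 1 else 0) = if b = a then 1 - p 1 else (0 : ℝ) :=
    if_congr (add_left_inj c) rfl rfl
  rw [hdiag]
  by_cases hk : 2 * s + r = k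
  · have hc := fibF_pos (k + 1)
    have hlast : a + 1 = fibF k := by
      have := fibF_le_succ_of_carryLen a
      rw [hk] at this
      omega
    have hextra : fibF (2 * (s + r + 1) - r) = a + c + 1 := by
      rw [show 2 * (s + r + 1) - r = k + 2 by omega, fibF_add_two]
      omega
    rw [if_pos hk, show s + 1 + r = s + r + 1 by ring, sum_Icc_succ_top (by omega), hextra,
      if_neg (show b + c ≠ a + c + 1 - (a + c + 1) by omega), hsum,
      if_neg (show b + c ≠ a + c + 1 by omega), if_neg (show b ≠ a + 1 by omega), add_zero]
  · rw [if_neg hk, if_congr (show b + c = a + c + 1 ↔ b = a + 1 by omega) rfl rfl, hsum]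

theorem stmt1_general (p : ℕ → ℝ)
    (i j n : ℕ) (hnpos : 0 < n)
    (hi1 : fibF n ≤ i) (hi2 : i ≤ fibF (n+1) - 1)
    (hj1 : fibF n ≤ j) (hj2 : j ≤ fibF (n+1) - 1) :
    Smat p i j = Smat p (i - fibF n) (j - fibF n) := by
  obtain ⟨k, rfl⟩ : ∃ k, n = k + 1 := ⟨n - 1, by omega⟩
  rw [fibF_add_two] at hi2 hj2
  have hpos := fibF_pos k
  obtain ⟨a, rfl⟩ : ∃ a, i = a + fibF (k + 1) := ⟨i - fibF (k + 1), by omega⟩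
  obtain ⟨b, rfl⟩ : ∃ b, j = b + fibF (k + 1) := ⟨j - fibF (k + 1), by omega⟩
  rw [Nat.add_sub_cancel, Nat.add_sub_cancel]
  exact Smat_add_fibF p (by omega) (by omega)

/-- Let `i, j, n` be positive integers with `F n ≤ i, j ≤ F (n+1) - 1`.
Then the transition probability from `i` to `j` equals the transition probability from
`i - F n` to `j - F n`, i.e. `S i j = S (i - F n) (j - F n)`. -/
theorem stmt1 (p : ℕ → ℝ) (hp : ∀ i, 1 ≤ i → 0 < p i ∧ p i ≤ 1)
    (i j n : ℕ) (hipos : 0 < i) (hjpos : 0 < j) (hnpos : 0 < n)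
    (hi1 : fibF n ≤ i) (hi2 : i ≤ fibF (n+1) - 1)
    (hj1 : fibF n ≤ j) (hj2 : j ≤ fibF (n+1) - 1) :
    Smat p i j = Smat p (i - fibF n) (j - fibF n) :=
  stmt1_general p i j n hnpos hi1 hi2 hj1 hj2
end

section
/- Let λ ∈ ℂ and let v = (v_i)_{i≥0} be a bounded complex sequence satisfying Sv = λv (i.e. Σ_{j≥0} S_{i,j} v_j = λ v_i for all i ≥ 0). Then v_k = q_k(λ) v_0 for every k ≥ 1; in particular, for every n ≥ 2 and every m with 0 < m < F_{n−1}, v_{F_n+m} v_0 = v_{F_n} v_m. -/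
/-- `rr p n = r_n = p (⌊(n+1)/2⌋ + 1)`. -/
noncomputable def rr (p : ℕ → ℝ) (n : ℕ) : ℝ := p ((n+1)/2 + 1)

/-- `qF p z n = q_{F_n}(z)`. -/
noncomputable def qF (p : ℕ → ℝ) (z : ℂ) : ℕ → ℂ
  | 0 => (z - (1 - (p 1 : ℂ))) / (p 1 : ℂ)
  | 1 => (1 / (p 2 : ℂ)) * (qF p z 0) ^ 2 - (1 / (p 2 : ℂ) - 1)
  | (n+2) => (1 / (rr p (n+2) : ℂ)) * qF p z (n+1) * qF p z n - (1 / (rr p (n+2) : ℂ) - 1)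

/-- `qN p z N = q_N(z) = ∏ᵢ q_{F_i}(z)^{ε_i(N)}` where `(ε_i(N))` are the Zeckendorf
digits of `N`. -/
noncomputable def qN (p : ℕ → ℝ) (z : ℂ) (N : ℕ) : ℂ :=
  ∏ i ∈ Finset.range (N+1), (qF p z i) ^ (zeck N i)

/-!
Row `N` of `S v = λ v` expresses `v (N + 1)` through `v N` and the values of `v` at the carry
targets `N + 1 - F_{c+2m-1}`, all smaller than `N + 1`; so `v` is determined by `v 0`, and it
suffices that `N ↦ q_N(λ)` satisfies the same relations. If the Zeckendorf digits of `N` are a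
high part `E` followed by ones at `c, c + 2, …, c + 2(r-1)` (and zeros elsewhere below
`c + 2r + 1`), then `N + 1` and every carry target keep the high part `E` and replace the run by
`F_{c+2r-1}`, resp. by the ones at `c + 2j`, `m ≤ j < r`. Since `q` is multiplicative over
disjoint digit sets, the row relation reduces to a polynomial identity in the `q_{F_n}`, proved by
induction on `r` from their recursion. The second claim holds because `F_n + m` has the digits
of `m` together with the digit `n`.
-/

open Finset

-- At `n = 0` the truncated `fibF (0 - 1) = fibF 0 = 1` stands for `F_{-1} = 1`.
lemma fibF_succ (n : ℕ) : fibF (n + 1) = fibF n + fibF (n - 1) := by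
  rcases n with _ | n <;> rfl

lemma lt_fibF : ∀ n, n < fibF n
  | 0 => fibF_pos 0
  | n + 1 => by
    have := lt_fibF n
    have := fibF_strictMono (lt_add_one n)
    omega

def IsSparse (D : Finset ℕ) : Prop := ∀ i ∈ D, i + 1 ∉ D

lemma IsSparse.mono {D D' : Finset ℕ} (hD : IsSparse D) (h : D' ⊆ D) : IsSparse D' :=
  fun i hi hi1 => hD i (h hi) (h hi1)

lemma IsSparse.union {A E : Finset ℕ} (hA : IsSparse A) (hE : IsSparse E)
    (hgap : ∀ a ∈ A, ∀ e ∈ E, a + 1 < e) : IsSparse (A ∪ E) := by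
  intro i hi hi1
  rw [mem_union] at hi hi1
  rcases hi with hi | hi <;> rcases hi1 with hi1 | hi1
  · exact hA i hi hi1
  · have := hgap i hi _ hi1
    omega
  · have := hgap _ hi1 i hi
    omega
  · exact hE i hi hi1

lemma IsSparse.lt_sub_one_of_insert {a : ℕ} {s : Finset ℕ} (hD : IsSparse (insert a s))
    (hs : ∀ x ∈ s, x < a) : ∀ x ∈ s, x < a - 1 := by
  intro x hx
  have hx1 := hD x (mem_insert_of_mem hx)
  have := hs x hx
  rw [mem_insert, not_or] at hx1
  omega

lemma isSparse_image_add_two_mul (c : ℕ) (s : Finset ℕ) : IsSparse (s.image (c + 2 * ·)) := by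
  intro i hi hi1
  simp only [mem_image] at hi hi1
  obtain ⟨j, -, rfl⟩ := hi
  obtain ⟨k, -, hk⟩ := hi1
  omega

lemma isSparse_singleton (a : ℕ) : IsSparse {a} := by
  intro i hi hi1
  rw [mem_singleton] at hi hi1
  omega

lemma fibF_le_sum {D : Finset ℕ} {i : ℕ} (hi : i ∈ D) : fibF i ≤ ∑ j ∈ D, fibF j :=
  single_le_sum (f := fibF) (fun _ _ => Nat.zero_le _) hi

lemma sum_fibF_lt {D : Finset ℕ} (hD : IsSparse D) {k : ℕ} (hk : ∀ i ∈ D, i < k) :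
    ∑ i ∈ D, fibF i < fibF k := by
  induction D using Finset.induction_on_max generalizing k with
  | empty => simpa using fibF_pos k
  | insert a s hs ih =>
    rw [sum_insert fun h => (hs a h).false]
    have h1 := ih (hD.mono (subset_insert a s)) (hD.lt_sub_one_of_insert hs)
    have h2 := fibF_strictMono.monotone (hk a (mem_insert_self a s))
    rw [fibF_succ] at h2
    omega

lemma zeck_fibF_add {t M : ℕ} (hM : M < fibF (t - 1)) (i : ℕ) :
    zeck (fibF t + M) i = if i = t then 1 else zeck M i := by
  have htop : Nat.findGreatest (fun j => fibF j ≤ fibF t + M) (fibF t + M) = t := by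
    refine Nat.findGreatest_eq_iff.2
      ⟨(lt_fibF t).le.trans (Nat.le_add_right _ _), fun _ => Nat.le_add_right _ _,
        fun k hk _ hle => ?_⟩
    have := fibF_strictMono.monotone (Nat.succ_le_of_lt hk)
    rw [fibF_succ] at this
    omega
  have hpos : fibF t + M ≠ 0 := (Nat.add_pos_left (fibF_pos t) M).ne'
  rw [zeck, dif_neg hpos, htop, Nat.add_sub_cancel_left]

lemma zeck_sum_fibF {D : Finset ℕ} (hD : IsSparse D) (i : ℕ) :
    zeck (∑ j ∈ D, fibF j) i = if i ∈ D then 1 else 0 := by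
  induction D using Finset.induction_on_max generalizing i with
  | empty => simp [zeck]
  | insert a s hs ih =>
    have hs' := hD.mono (subset_insert a s)
    rw [sum_insert fun h => (hs a h).false,
      zeck_fibF_add (sum_fibF_lt hs' (hD.lt_sub_one_of_insert hs)), ih hs']
    by_cases h : i = a <;> simp [h]

lemma exists_isSparse_sum_fibF (N : ℕ) : ∃ D, IsSparse D ∧ ∑ i ∈ D, fibF i = N := by
  induction N using Nat.strong_induction_on with
  | _ N ih =>
  rcases N.eq_zero_or_pos with rfl | hN
  · exact ⟨∅, fun _ h => absurd h (notMem_empty _), sum_empty⟩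
  set t := Nat.findGreatest (fun j => fibF j ≤ N) N
  have ht : fibF t ≤ N :=
    Nat.findGreatest_spec (P := fun j => fibF j ≤ N) (m := 0) (Nat.zero_le N) hN
  have ht1 : N < fibF (t + 1) := by
    by_contra! h
    exact Nat.findGreatest_is_greatest t.lt_succ_self ((lt_fibF _).le.trans h) h
  rw [fibF_succ] at ht1
  obtain ⟨D, hD, hDsum⟩ := ih (N - fibF t) (Nat.sub_lt hN (fibF_pos t))
  have hlt : ∀ x ∈ D, x + 1 < t := by
    intro x hx
    have : fibF x < fibF (t - 1) := by
      have := fibF_le_sum hx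
      omega
    have := fibF_strictMono.lt_iff_lt.1 this
    omega
  refine ⟨insert t D, fun x hx hx1 => ?_, ?_⟩
  · rw [mem_insert] at hx hx1
    rcases hx with rfl | hx <;> rcases hx1 with h | h
    · omega
    · have := hlt _ h
      omega
    · have := hlt x hx
      omega
    · exact hD x hx h
  · rw [sum_insert fun h => by have := hlt t h; omega, hDsum]
    omega

section qN

variable (p : ℕ → ℝ) (z : ℂ)

lemma qN_sum_fibF {D : Finset ℕ} (hD : IsSparse D) :
    qN p z (∑ i ∈ D, fibF i) = ∏ i ∈ D, qF p z i := by
  unfold qN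
  simp_rw [zeck_sum_fibF hD, pow_ite, pow_one, pow_zero]
  rw [prod_ite_mem, inter_eq_right.2]
  intro i hi
  rw [mem_range, Nat.lt_succ_iff]
  exact (lt_fibF i).le.trans (fibF_le_sum hi)

lemma qN_sum_add_sum {A E : Finset ℕ} (hA : IsSparse A) (hE : IsSparse E)
    (hgap : ∀ a ∈ A, ∀ e ∈ E, a + 1 < e) :
    qN p z (∑ i ∈ A, fibF i + ∑ i ∈ E, fibF i) =
      (∏ i ∈ A, qF p z i) * ∏ i ∈ E, qF p z i := by
  have hdisj : Disjoint A E := disjoint_left.2 fun a ha he => by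
    have := hgap a ha a he
    omega
  rw [← sum_union hdisj, qN_sum_fibF p z (hA.union hE hgap), prod_union hdisj]

lemma qN_zero : qN p z 0 = 1 := by
  simpa using qN_sum_fibF p z (D := ∅) (fun _ h => absurd h (notMem_empty _))

lemma qN_fibF_add {n m : ℕ} (hm : m < fibF (n - 1)) :
    qN p z (fibF n + m) = qF p z n * qN p z m := by
  obtain ⟨D, hD, rfl⟩ := exists_isSparse_sum_fibF m
  have hgap : ∀ a ∈ D, ∀ e ∈ ({n} : Finset ℕ), a + 1 < e := by
    intro a ha e he
    rw [mem_singleton] at he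
    have := fibF_strictMono.lt_iff_lt.1 ((fibF_le_sum ha).trans_lt hm)
    omega
  have := qN_sum_add_sum p z hD (isSparse_singleton n) hgap
  rw [sum_singleton, prod_singleton] at this
  rw [add_comm, this, qN_sum_fibF p z hD, mul_comm]

lemma qN_fibF (n : ℕ) : qN p z (fibF n) = qF p z n := by
  simpa [qN_zero] using qN_fibF_add p z (fibF_pos (n - 1))

end qN

/- The digits of `N` end with `00(10)^s` or `00(10)^s1`: below position
`runStart N + 2 * runLen N` they are `1` exactly at `runStart N + 2 * j`, `j < runLen N`.
The case `00(10)^s` has `runStart N = 1`, `runLen N = s`; the case `00(10)^s1` has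
`runStart N = 0`, `runLen N = s + 1`. -/
def runStart (N : ℕ) : ℕ := 1 - zeck N 0

def runLen (N : ℕ) : ℕ := carryLen N + zeck N 0

lemma IsSparse.mem_iff_of_run {D : Finset ℕ} (hD : IsSparse D) {c r : ℕ}
    (hlow : ∀ i < c, i ∉ D) (hrun : ∀ j < r, c + 2 * j ∈ D) (hend : c + 2 * r ∉ D)
    {i : ℕ} (hi : i ≤ c + 2 * r) : i ∈ D ↔ ∃ j < r, c + 2 * j = i := by
  by_cases hic : i < c
  · refine iff_of_false (hlow i hic) ?_
    rintro ⟨j, -, rfl⟩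
    omega
  obtain ⟨j, hj | hj⟩ := Nat.even_or_odd' (i - c)
  · have hij : i = c + 2 * j := by omega
    subst hij
    rcases lt_or_eq_of_le (show j ≤ r by omega) with hjr | rfl
    · exact iff_of_true (hrun j hjr) ⟨j, hjr, rfl⟩
    · refine iff_of_false hend ?_
      rintro ⟨k, hk, hkj⟩
      omega
  · have hij : i = c + 2 * j + 1 := by omega
    subst hij
    refine iff_of_false (hD _ (hrun j (by omega))) ?_
    rintro ⟨k, -, hk⟩
    omega

lemma run_spec {N : ℕ} {D : Finset ℕ} (hD : IsSparse D) (hN : ∑ i ∈ D, fibF i = N) :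
    (∀ i < runStart N, i ∉ D) ∧ (∀ j < runLen N, runStart N + 2 * j ∈ D) ∧
      runStart N + 2 * runLen N ∉ D := by
  have hz : ∀ i, zeck N i = if i ∈ D then 1 else 0 := hN ▸ zeck_sum_fibF hD
  have hz1 : ∀ i, zeck N i = 1 ↔ i ∈ D := fun i => by simp [hz]
  have hz0 : ∀ i, zeck N i = 0 ↔ i ∉ D := fun i => by simp [hz]
  by_cases h0 : 0 ∈ D
  · have h1 : zeck N 0 = 1 := (hz1 0).2 h0
    have hcarry : carryLen N = Nat.find (exists_break1 N) := by simp [carryLen, h1]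
    have hspec := Nat.find_spec (exists_break1 N)
    set s := Nat.find (exists_break1 N)
    have hmin : ∀ j < s, 2 * j + 2 ∈ D := fun j hj =>
      (by simpa [hz1, hz0] using Nat.find_min (exists_break1 N) hj :
        2 * j + 2 ∈ D ∧ 2 * j + 1 ∉ D).1
    have hend : ¬(2 * s + 2 ∈ D ∧ 2 * s + 1 ∉ D) := by
      simpa [hz1, hz0] using hspec
    have hrun : ∀ j < s + 1, 2 * j ∈ D := by
      rintro (_ | j) hj
      · exact h0
      · simpa [mul_add] using hmin j (by omega)
    simp only [runStart, runLen, h1, hcarry, Nat.sub_self, zero_add]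
    refine ⟨fun i hi => absurd hi (Nat.not_lt_zero i), hrun, fun h => hend ⟨?_, ?_⟩⟩
    · simpa [mul_add] using h
    · exact hD _ (hrun s s.lt_succ_self)
  · have h1 : zeck N 0 = 0 := (hz0 0).2 h0
    have hcarry : carryLen N = Nat.find (exists_break0 N) := by simp [carryLen, h1]
    have hspec := Nat.find_spec (exists_break0 N)
    set s := Nat.find (exists_break0 N)
    have hmin : ∀ j < s, 2 * j + 1 ∈ D := fun j hj =>
      (by simpa [hz1, hz0] using Nat.find_min (exists_break0 N) hj :
        2 * j + 1 ∈ D ∧ 2 * j ∉ D).1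
    have hend : ¬(2 * s + 1 ∈ D ∧ 2 * s ∉ D) := by
      simpa [hz1, hz0] using hspec
    have h2s : 2 * s ∉ D := by
      rcases s.eq_zero_or_pos with hs | hs
      · simpa [hs] using h0
      · simpa [show 2 * (s - 1) + 1 + 1 = 2 * s by omega] using hD _ (hmin (s - 1) (by omega))
    simp only [runStart, runLen, h1, hcarry, Nat.sub_zero, add_zero]
    refine ⟨fun i hi => by rwa [Nat.lt_one_iff.1 hi], fun j hj => ?_,
      fun h => hend ⟨?_, h2s⟩⟩
    · simpa [add_comm] using hmin j hj
    · simpa [add_comm] using h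

lemma runStart_le_one (N : ℕ) : runStart N ≤ 1 := Nat.sub_le 1 _

lemma fibF_runStart_sub_one (N : ℕ) : fibF (runStart N - 1) = 1 := by
  rw [Nat.sub_eq_zero_of_le (runStart_le_one N)]
  rfl

lemma runStart_add_runLen_pos (N : ℕ) : 0 < runStart N + runLen N := by
  unfold runStart runLen
  omega

lemma sum_fibF_Ico_add_fibF (c : ℕ) {m r : ℕ} (hmr : m ≤ r) :
    ∑ j ∈ Ico m r, fibF (c + 2 * j) + fibF (c + 2 * m - 1) = fibF (c + 2 * r - 1) := by
  induction r, hmr using Nat.le_induction with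
  | base => simp
  | succ r hmr ih =>
    rw [sum_Ico_succ_top hmr, show c + 2 * (r + 1) - 1 = c + 2 * r + 1 by omega, fibF_succ]
    omega

lemma exists_carry_decomposition (N : ℕ) :
    ∃ E : Finset ℕ, IsSparse E ∧ (∀ e ∈ E, runStart N + 2 * runLen N < e) ∧
      N + 1 = fibF (runStart N + 2 * runLen N - 1) + ∑ e ∈ E, fibF e ∧
      ∀ m ≤ runLen N, N + 1 - fibF (runStart N + 2 * m - 1) =
        ∑ j ∈ Ico m (runLen N), fibF (runStart N + 2 * j) + ∑ e ∈ E, fibF e := by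
  obtain ⟨D, hD, hN⟩ := exists_isSparse_sum_fibF N
  obtain ⟨hlow, hrun, hend⟩ := run_spec hD hN
  set c := runStart N
  set r := runLen N
  set E := D.filter (c + 2 * r < ·)
  have hsplit : D = (range r).image (c + 2 * ·) ∪ E := by
    ext i
    by_cases hi : i ≤ c + 2 * r
    · simp [E, hD.mem_iff_of_run hlow hrun hend hi, hi]
    · have : ¬∃ j < r, c + 2 * j = i := by
        rintro ⟨j, hj, rfl⟩
        omega
      simp [E, this]
      omega
  have hdisj : Disjoint ((range r).image (c + 2 * ·)) E := by
    simp only [disjoint_left, mem_image, mem_range, E, mem_filter]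
    rintro _ ⟨j, hj, rfl⟩ ⟨-, h⟩
    omega
  have hNsum : N = ∑ j ∈ range r, fibF (c + 2 * j) + ∑ e ∈ E, fibF e := by
    rw [← hN, hsplit, sum_union hdisj, sum_image fun _ _ _ _ h => by simpa using h]
  have hfull := sum_fibF_Ico_add_fibF c (Nat.zero_le r)
  rw [mul_zero, add_zero, fibF_runStart_sub_one, ← range_eq_Ico] at hfull
  refine ⟨E, hD.mono (filter_subset _ _), fun e he => (mem_filter.1 he).2, by omega,
    fun m hm => ?_⟩
  have hpart := sum_fibF_Ico_add_fibF c hm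
  rw [range_eq_Ico, ← sum_Ico_consecutive _ (Nat.zero_le m) hm] at hNsum hfull
  omega

lemma exists_qN_carry (p : ℕ → ℝ) (z : ℂ) (N : ℕ) :
    ∃ Q : ℂ, qN p z (N + 1) = qF p z (runStart N + 2 * runLen N - 1) * Q ∧
      ∀ m ≤ runLen N, qN p z (N + 1 - fibF (runStart N + 2 * m - 1)) =
        (∏ j ∈ Ico m (runLen N), qF p z (runStart N + 2 * j)) * Q := by
  obtain ⟨E, hE, hEgt, hsucc, hsub⟩ := exists_carry_decomposition N
  refine ⟨∏ e ∈ E, qF p z e, ?_, fun m hm => ?_⟩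
  · rw [hsucc, ← sum_singleton fibF, ← prod_singleton (qF p z)]
    exact qN_sum_add_sum p z (isSparse_singleton _) hE fun a ha e he => by
      have := hEgt e he
      have := runStart_add_runLen_pos N
      rw [mem_singleton] at ha
      omega
  · have hinj : Set.InjOn (runStart N + 2 * ·) (Ico m (runLen N)) := fun _ _ _ _ h => by
      simpa using h
    rw [hsub m hm, ← sum_image (f := fibF) hinj, ← prod_image (f := qF p z) hinj]
    refine qN_sum_add_sum p z (isSparse_image_add_two_mul _ _) hE fun a ha e he => ?_
    obtain ⟨j, hj, rfl⟩ := mem_image.1 ha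
    have := hEgt e he
    have := (mem_Ico.1 hj).2
    omega

lemma Pprod_succ (p : ℕ → ℝ) (t : ℕ) : Pprod p (t + 1) = Pprod p t * p (t + 1) :=
  prod_Icc_succ_top (by omega) p

section Recursion

variable {p : ℕ → ℝ} (z : ℂ)

lemma Pprod_ne_zero (hp : ∀ i, 1 ≤ i → p i ≠ 0) (t : ℕ) : (Pprod p t : ℂ) ≠ 0 := by
  rw [Complex.ofReal_ne_zero, Pprod, prod_ne_zero_iff]
  exact fun i hi => hp i (mem_Icc.1 hi).1

lemma p_one_mul_qF_zero (hp1 : p 1 ≠ 0) : (p 1 : ℂ) * qF p z 0 = z - (1 - p 1) := by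
  have : (p 1 : ℂ) ≠ 0 := Complex.ofReal_ne_zero.2 hp1
  simp only [qF]
  field_simp

-- At `n = 1` the truncated `n - 2 = 0` turns this into `p₂ q_{F_1} = q_{F_0}² - (1 - p₂)`.
lemma rr_mul_qF {n : ℕ} (hn : 1 ≤ n) (hr : rr p n ≠ 0) :
    (rr p n : ℂ) * qF p z n = qF p z (n - 1) * qF p z (n - 2) - (1 - rr p n) := by
  have : (rr p n : ℂ) ≠ 0 := Complex.ofReal_ne_zero.2 hr
  obtain _ | _ | n := n
  · omega
  · show (rr p 1 : ℂ) * qF p z 1 = qF p z 0 * qF p z 0 - (1 - rr p 1)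
    rw [show qF p z 1 = 1 / (rr p 1 : ℂ) * qF p z 0 ^ 2 - (1 / (rr p 1 : ℂ) - 1) from rfl]
    field_simp
  · show (rr p (n + 2) : ℂ) * qF p z (n + 2) = qF p z (n + 1) * qF p z n - (1 - rr p (n + 2))
    rw [qF]
    field_simp

-- Row `N` of `S v = λ v` at `v = q(λ)`, after dividing out the factor common to all its terms.
lemma qF_carry_identity (hp : ∀ i, 1 ≤ i → p i ≠ 0) {c : ℕ} (hc : c ≤ 1) (r : ℕ) :
    (p 1 : ℂ) * qF p z 0 * ∏ j ∈ range r, qF p z (c + 2 * j) =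
      Pprod p (r + 1) * qF p z (c + 2 * r - 1) +
        ∑ m ∈ Icc 1 r,
          (Pprod p m : ℂ) * (1 - p (m + 1)) * ∏ j ∈ Ico m r, qF p z (c + 2 * j) := by
  induction r with
  | zero => simp [Pprod, show c - 1 = 0 by omega]
  | succ r ih =>
    have hrr : rr p (c + 2 * r + 1) = p (r + 2) := by
      unfold rr
      congr 1
      omega
    have hrec := rr_mul_qF z (n := c + 2 * r + 1) (by omega) (hrr ▸ hp _ (by omega))
    rw [hrr,
      show c + 2 * r + 1 - 1 = c + 2 * r by omega,
      show c + 2 * r + 1 - 2 = c + 2 * r - 1 by omega] at hrec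
    have hsum : ∑ m ∈ Icc 1 r, (Pprod p m : ℂ) * (1 - p (m + 1)) *
          ∏ j ∈ Ico m (r + 1), qF p z (c + 2 * j) =
        (∑ m ∈ Icc 1 r, (Pprod p m : ℂ) * (1 - p (m + 1)) *
          ∏ j ∈ Ico m r, qF p z (c + 2 * j)) * qF p z (c + 2 * r) := by
      rw [sum_mul]
      refine sum_congr rfl fun m hm => ?_
      rw [prod_Ico_succ_top (mem_Icc.1 hm).2]
      ring
    rw [prod_range_succ, ← mul_assoc, ih, sum_Icc_succ_top (by omega), Ico_self, prod_empty,
      hsum, show c + 2 * (r + 1) - 1 = c + 2 * r + 1 by omega, Pprod_succ p (r + 1)]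
    push_cast
    linear_combination (-(Pprod p (r + 1) : ℂ)) * hrec

end Recursion

lemma Smat_eq (p : ℕ → ℝ) (N M : ℕ) :
    Smat p N M = (if M = N then 1 - p 1 else 0) +
      ((if M = N + 1 then Pprod p (runLen N + 1) else 0) +
        ∑ m ∈ Icc 1 (runLen N), if M = N + 1 - fibF (runStart N + 2 * m - 1) then
          Pprod p m * (1 - p (m + 1)) else 0) := by
  rcases (zeck_le_one N 0).eq_or_lt with h | h
  · simp [Smat, runStart, runLen, h, add_assoc]
  · simp [Smat, runStart, runLen, Nat.lt_one_iff.1 h]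

lemma hasSum_Smat_mul (p : ℕ → ℝ) (v : ℕ → ℂ) (N : ℕ) :
    HasSum (fun M => (Smat p N M : ℂ) * v M)
      ((1 - p 1) * v N + (Pprod p (runLen N + 1) * v (N + 1) +
        ∑ m ∈ Icc 1 (runLen N),
          (Pprod p m : ℂ) * (1 - p (m + 1)) * v (N + 1 - fibF (runStart N + 2 * m - 1)))) := by
  have hdelta (a : ℕ) (x : ℂ) :
      HasSum (fun M => (if M = a then x else 0) * v M) (x * v a) := by
    convert hasSum_ite_eq a (x * v a) using 1
    funext M
    split_ifs with h <;> simp [h]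
  simp_rw [Smat_eq, Complex.ofReal_add, Complex.ofReal_sum, apply_ite Complex.ofReal,
    Complex.ofReal_zero, add_mul, sum_mul]
  push_cast
  exact (hdelta _ _).add ((hdelta _ _).add (hasSum_sum fun m _ => hdelta _ _))

theorem eq_qN_mul_of_eigenvector {p : ℕ → ℝ} (hp : ∀ i, 1 ≤ i → p i ≠ 0) {lam : ℂ}
    {v : ℕ → ℂ}
    (heig : ∀ i, ∑' j, (Smat p i j : ℂ) * v j = lam * v i) (N : ℕ) :
    v N = qN p lam N * v 0 := by
  induction N using Nat.strong_induction_on with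
  | _ N ih =>
  rcases N with _ | N
  · rw [qN_zero, one_mul]
  obtain ⟨Q, hsucc, hsub⟩ := exists_qN_carry p lam N
  have hid := qF_carry_identity lam hp (runStart_le_one N) (runLen N)
  have hrow := (hasSum_Smat_mul p v N).tsum_eq.symm.trans (heig N)
  set c := runStart N
  set r := runLen N
  have hvN : v N = (∏ j ∈ range r, qF p lam (c + 2 * j)) * Q * v 0 := by
    have h0 := hsub 0 (Nat.zero_le r)
    rw [mul_zero, add_zero, fibF_runStart_sub_one, Nat.add_sub_cancel] at h0
    rw [ih N N.lt_succ_self, h0, range_eq_Ico]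
  have hvsub : ∑ m ∈ Icc 1 r,
        (Pprod p m : ℂ) * (1 - p (m + 1)) * v (N + 1 - fibF (c + 2 * m - 1)) =
      (∑ m ∈ Icc 1 r, (Pprod p m : ℂ) * (1 - p (m + 1)) *
        ∏ j ∈ Ico m r, qF p lam (c + 2 * j)) * Q * v 0 := by
    rw [sum_mul, sum_mul]
    refine sum_congr rfl fun m hm => ?_
    rw [ih _ (by have := fibF_pos (c + 2 * m - 1); omega), hsub m (mem_Icc.1 hm).2]
    ring
  rw [hvsub, hvN] at hrow
  apply mul_left_cancel₀ (Pprod_ne_zero hp (r + 1))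
  rw [hsucc]
  linear_combination hrow + Q * v 0 * hid -
    (∏ j ∈ range r, qF p lam (c + 2 * j)) * Q * v 0 * p_one_mul_qF_zero lam (hp 1 le_rfl)

theorem stmt8_general (p : ℕ → ℝ) (hp : ∀ i, 1 ≤ i → 0 < p i ∧ p i ≤ 1)
    (lam : ℂ) (v : ℕ → ℂ)
    (heig : ∀ i : ℕ, ∑' j : ℕ, (Smat p i j : ℂ) * v j = lam * v i) :
    (∀ k, 1 ≤ k → v k = qN p lam k * v 0) ∧
    (∀ n m : ℕ, 2 ≤ n → 0 < m → m < fibF (n-1) →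
      v (fibF n + m) * v 0 = v (fibF n) * v m) := by
  have hv := eq_qN_mul_of_eigenvector (fun i hi => (hp i hi).1.ne') heig
  refine ⟨fun k _ => hv k, fun n m _ _ hm => ?_⟩
  rw [hv (fibF n + m), hv (fibF n), hv m, qN_fibF_add p lam hm, qN_fibF]
  ring

/-- Let `λ ∈ ℂ` and let `v` be a bounded complex sequence with
`S v = λ v`.  Then `v k = q_k(λ) * v 0` for all `k ≥ 1`; in particular for every
`n ≥ 2` and `0 < m < F (n-1)` one has `v (F n + m) * v 0 = v (F n) * v m`. -/
theorem stmt8 (p : ℕ → ℝ) (hp : ∀ i, 1 ≤ i → 0 < p i ∧ p i ≤ 1)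
    (lam : ℂ) (v : ℕ → ℂ) (hv : ∃ C : ℝ, ∀ i, ‖v i‖ ≤ C)
    (heig : ∀ i : ℕ, ∑' j : ℕ, (Smat p i j : ℂ) * v j = lam * v i) :
    (∀ k, 1 ≤ k → v k = qN p lam k * v 0) ∧
    (∀ n m : ℕ, 2 ≤ n → 0 < m → m < fibF (n-1) →
      v (fibF n + m) * v 0 = v (fibF n) * v m) :=
  stmt8_general p hp lam v heig
end
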